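/- arXiv:1411.5876 — 2 statements merged into one kernel-verified Lean document; each statement's English description precedes it below -/
import Mathlib

section
/- Fix r ≥ 2, m ≥ 1, and let A_k = I_{r^{m-k}} ⊗ 𝟙_{1/r} ⊗ I_{r^{k-1}} for k ∈ [m]. For k ∈ [m] and i ∈ [r^m], let N_k(i) = {j : A_k^{ij} > 0} and D_{k-1}(i) = {j : (A_{k-1}⋯A_1)^{ij} > 0} (with D_0(i) = {i}). If u_1, u_2 ∈ N_k(i) and u_1 ≠ u_2, then D_{k-1}(u_1) ∩ D_{k-1}(u_2) = ∅. -/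
/-! A positive entry `A_k(i, j)` means that `i` and `j` agree in every base-`r` digit except
(possibly) digit `k - 1`. Hence the factors `A_1, …, A_{k-1}` never touch the digits from `k - 1`
up, so every ancestor of `u` has the same quotient by `r ^ (k - 1)` as `u`, while two parents of
the same `i` have the same remainder mod `r ^ (k - 1)` as `i`. A common ancestor of `u₁` and `u₂`
thus forces `u₁ = u₂`. -/

open Matrix BigOperators

/-- Kronecker product of square matrices, with blocks of `A ⊗ B` given by `A^{pq} • B`,
reindexed to `Fin (M * N)`. -/
noncomputable def kron {M N : ℕ} (A : Matrix (Fin M) (Fin M) ℝ) (B : Matrix (Fin N) (Fin N) ℝ) :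
    Matrix (Fin (M * N)) (Fin (M * N)) ℝ :=
  Matrix.reindex finProdFinEquiv finProdFinEquiv (Matrix.kroneckerMap (· * ·) A B)

/-- The n×n matrix with every entry equal to 1/n. -/
noncomputable def onesMat (n : ℕ) : Matrix (Fin n) (Fin n) ℝ := fun _ _ => 1 / (n : ℝ)


lemma sizeEq (r m : ℕ) (k : Fin m) : r ^ (m - 1 - k.1) * (r * r ^ k.1) = r ^ m := by
  have hk : k.1 < m := k.isLt
  rw [← pow_succ', ← pow_add]
  congr 1
  omega

/-- The radix-r butterfly matrix `A_k = I_{r^(m-k)} ⊗ 𝟙_{1/r} ⊗ I_{r^(k-1)}`, where the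
1-based index `k ∈ [m]` is represented by the 0-based `k : Fin m` (so `k.1 = k - 1`). -/
noncomputable def Ak (r m : ℕ) (k : Fin m) : Matrix (Fin (r ^ m)) (Fin (r ^ m)) ℝ :=
  Matrix.reindex (finCongr (sizeEq r m k)) (finCongr (sizeEq r m k))
    (kron (1 : Matrix (Fin (r ^ (m - 1 - k.1))) (Fin (r ^ (m - 1 - k.1))) ℝ)
      (kron (onesMat r) (1 : Matrix (Fin (r ^ k.1)) (Fin (r ^ k.1)) ℝ)))

namespace Matrix

variable {l n o R : Type*} [Fintype n] [Semiring R] [PartialOrder R] [IsOrderedRing R]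

theorem exists_pos_of_mul_apply_pos {M : Matrix l n R} {N : Matrix n o R}
    (hM : ∀ a b, 0 ≤ M a b) (hN : ∀ a b, 0 ≤ N a b) {a : l} {b : o} (h : 0 < (M * N) a b) :
    ∃ c, 0 < M a c ∧ 0 < N c b := by
  rw [mul_apply, Finset.sum_pos_iff_of_nonneg fun c _ => mul_nonneg (hM a c) (hN c b)] at h
  obtain ⟨c, -, hc⟩ := h
  refine ⟨c, (hM a c).lt_of_ne ?_, (hN c b).lt_of_ne ?_⟩ <;> rintro h <;> simp [← h] at hc

variable [DecidableEq n]

theorem list_prod_apply_nonneg {L : List (Matrix n n R)} (hL : ∀ M ∈ L, ∀ a b, 0 ≤ M a b)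
    (a b : n) : 0 ≤ L.prod a b := by
  induction L generalizing a b with
  | nil => by_cases h : a = b <;> simp [h]
  | cons M L ih =>
    rw [List.prod_cons, mul_apply]
    exact Finset.sum_nonneg fun c _ => mul_nonneg (hL M (by simp) a c)
      (ih (fun N hN => hL N (by simp [hN])) c b)

theorem eq_of_list_prod_apply_pos {α : Type*} (f : n → α) {L : List (Matrix n n R)}
    (hL : ∀ M ∈ L, ∀ a b, 0 ≤ M a b) (hf : ∀ M ∈ L, ∀ a b, 0 < M a b → f a = f b)
    {a b : n} (h : 0 < L.prod a b) : f a = f b := by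
  induction L generalizing a b with
  | nil =>
    by_cases hab : a = b
    · rw [hab]
    · simp [hab] at h
  | cons M L ih =>
    rw [List.prod_cons] at h
    obtain ⟨c, hMc, hLc⟩ := exists_pos_of_mul_apply_pos (hL M (by simp))
      (list_prod_apply_nonneg fun N hN => hL N (by simp [hN])) h
    exact (hf M (by simp) a c hMc).trans
      (ih (fun N hN => hL N (by simp [hN])) (fun N hN => hf N (by simp [hN])) hLc)

end Matrix

lemma Ak_apply (r m : ℕ) (k : Fin m) (i j : Fin (r ^ m)) :
    Ak r m k i j =
      (if i.1 / (r * r ^ k.1) = j.1 / (r * r ^ k.1) then (1 : ℝ) else 0) *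
        ((1 / r) * if i.1 % r ^ k.1 = j.1 % r ^ k.1 then 1 else 0) := by
  have hd : r ^ k.1 ∣ r * r ^ k.1 := Dvd.intro_left r rfl
  simp [Ak, kron, onesMat, one_apply, Fin.divNat, Fin.modNat, Fin.ext_iff,
    Nat.mod_mod_of_dvd _ hd]

lemma Ak_nonneg (r m : ℕ) (k : Fin m) (i j : Fin (r ^ m)) : 0 ≤ Ak r m k i j := by
  rw [Ak_apply]
  positivity

lemma div_eq_and_mod_eq_of_Ak_pos {r m : ℕ} {k : Fin m} {i j : Fin (r ^ m)}
    (h : 0 < Ak r m k i j) :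
    i.1 / (r * r ^ k.1) = j.1 / (r * r ^ k.1) ∧ i.1 % r ^ k.1 = j.1 % r ^ k.1 := by
  rw [Ak_apply] at h
  by_contra hij
  rw [not_and_or] at hij
  rcases hij with hij | hij <;> simp [hij] at h

lemma div_pow_eq_of_Ak_pos {r m s : ℕ} {k : Fin m} (hks : k.1 < s) {i j : Fin (r ^ m)}
    (h : 0 < Ak r m k i j) : i.1 / r ^ s = j.1 / r ^ s := by
  have hs : r ^ s = r * r ^ k.1 * r ^ (s - (k.1 + 1)) := by
    rw [← pow_succ', ← pow_add, Nat.add_sub_cancel' hks]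
  rw [hs, ← Nat.div_div_eq_div_mul i.1, ← Nat.div_div_eq_div_mul j.1,
    (div_eq_and_mod_eq_of_Ak_pos h).1]

/-- Distinct parents u₁ ≠ u₂ of the same index i through A_k have disjoint ancestor sets
D_{k-1}(u₁) ∩ D_{k-1}(u₂) = ∅, where D_{k-1}(u) is the support of row u of A_{k-1} ⋯ A_1
(the empty product for k = 1, giving D_0(u) = {u}). -/
theorem butterfly_parents_disjoint_ancestors (r m : ℕ) (k : ℕ)
    (hk1 : 1 ≤ k) (hk2 : k ≤ m) (i u₁ u₂ : Fin (r ^ m))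
    (h1 : 0 < Ak r m ⟨k - 1, by omega⟩ i u₁)
    (h2 : 0 < Ak r m ⟨k - 1, by omega⟩ i u₂)
    (hne : u₁ ≠ u₂) :
    {j : Fin (r ^ m) |
        0 < ((List.ofFn (fun t : Fin (k - 1) =>
          Ak r m (Fin.castLE (by omega : k - 1 ≤ m) t))).reverse.prod) u₁ j}
      ∩ {j : Fin (r ^ m) |
        0 < ((List.ofFn (fun t : Fin (k - 1) =>
          Ak r m (Fin.castLE (by omega : k - 1 ≤ m) t))).reverse.prod) u₂ j}
      = ∅ := by
  set L := (List.ofFn fun t : Fin (k - 1) =>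
    Ak r m (Fin.castLE (by omega : k - 1 ≤ m) t)).reverse
  have hL : ∀ M ∈ L, ∀ a b, 0 ≤ M a b := by
    simp only [L, List.mem_reverse, List.mem_ofFn, forall_exists_index]
    rintro _ t rfl
    exact Ak_nonneg _ _ _
  have hL_div : ∀ M ∈ L, ∀ a b, 0 < M a b → a.1 / r ^ (k - 1) = b.1 / r ^ (k - 1) := by
    simp only [L, List.mem_reverse, List.mem_ofFn, forall_exists_index]
    rintro _ t rfl a b hab
    exact div_pow_eq_of_Ak_pos (by simp) hab
  have hdiv {a b} (h : 0 < L.prod a b) : a.1 / r ^ (k - 1) = b.1 / r ^ (k - 1) :=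
    Matrix.eq_of_list_prod_apply_pos (fun a : Fin (r ^ m) => a.1 / r ^ (k - 1)) hL hL_div h
  refine Set.eq_empty_of_forall_notMem fun j hj => hne (Fin.ext ?_)
  exact Nat.ext_div_mod ((hdiv hj.1).trans (hdiv hj.2).symm)
    ((div_eq_and_mod_eq_of_Ak_pos h1).2.symm.trans (div_eq_and_mod_eq_of_Ak_pos h2).2)
end

section
/- Fix r ≥ 2, m ≥ 1, and let A_k = I_{r^{m-k}} ⊗ 𝟙_{1/r} ⊗ I_{r^{k-1}} for k ∈ [m]. Define the set of paths P = {(j_0,...,j_m) ∈ [r^m]^{m+1} : Π_{k=0}^{m-1} A_{k+1}^{j_{k+1} j_k} ≠ 0}. Then for any two paths (i_0,...,i_m), (j_0,...,j_m) ∈ P with i_0 = j_0 and i_m = j_m, one has (i_0,...,i_m) = (j_0,...,j_m); that is, between any starting and ending index there is at most one path. -/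
open Matrix BigOperators

lemma kron_apply' {M N : ℕ} (A : Matrix (Fin M) (Fin M) ℝ) (B : Matrix (Fin N) (Fin N) ℝ)
    (i j : Fin (M * N)) : kron A B i j = A i.divNat j.divNat * B i.modNat j.modNat := by
  simp [kron, finProdFinEquiv_symm_apply]

/-- A nonzero entry of `Ak` forces equality of the high digits and the low digits. -/
lemma ak_ne_zero' {r m : ℕ} (k : Fin m) {i j : Fin (r ^ m)} (h : Ak r m k i j ≠ 0) :
    i.1 / r ^ (k.1 + 1) = j.1 / r ^ (k.1 + 1) ∧ i.1 % r ^ k.1 = j.1 % r ^ k.1 := by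
  simp only [Ak, Matrix.reindex_apply, Matrix.submatrix_apply, kron_apply'] at h
  have h1 : ((1 : Matrix (Fin (r ^ (m - 1 - k.1))) (Fin (r ^ (m - 1 - k.1))) ℝ)
      ((finCongr (sizeEq r m k)).symm i).divNat ((finCongr (sizeEq r m k)).symm j).divNat) ≠ 0 :=
    fun hz => h (by rw [hz]; ring)
  have h2 : ((1 : Matrix (Fin (r ^ k.1)) (Fin (r ^ k.1)) ℝ)
      ((finCongr (sizeEq r m k)).symm i).modNat.modNat
      ((finCongr (sizeEq r m k)).symm j).modNat.modNat) ≠ 0 :=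
    fun hz => h (by rw [hz]; ring)
  have e1 : ((finCongr (sizeEq r m k)).symm i).divNat
      = ((finCongr (sizeEq r m k)).symm j).divNat := by
    by_contra hne; exact h1 (Matrix.one_apply_ne hne)
  have e2 : ((finCongr (sizeEq r m k)).symm i).modNat.modNat
      = ((finCongr (sizeEq r m k)).symm j).modNat.modNat := by
    by_contra hne; exact h2 (Matrix.one_apply_ne hne)
  have v1 := congrArg Fin.val e1
  have v2 := congrArg Fin.val e2
  simp only [Fin.coe_divNat, Fin.coe_modNat, finCongr_symm, finCongr_apply, Fin.coe_cast] at v1 v2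
  constructor
  · rw [pow_succ']; exact v1
  · rwa [Nat.mod_mod_of_dvd _ ⟨r, mul_comm _ _⟩, Nat.mod_mod_of_dvd _ ⟨r, mul_comm _ _⟩] at v2

lemma div_lift' (r t : ℕ) {b c : ℕ} (h : b / r ^ t = c / r ^ t) :
    b / r ^ (t + 1) = c / r ^ (t + 1) := by
  rw [pow_succ, ← Nat.div_div_eq_div_mul, ← Nat.div_div_eq_div_mul, h]

lemma mod_lower' (r t : ℕ) {b c : ℕ} (h : b % r ^ (t + 1) = c % r ^ (t + 1)) :
    b % r ^ t = c % r ^ t := by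
  rw [← Nat.mod_mod_of_dvd b (pow_dvd_pow r (Nat.le_succ t)),
    ← Nat.mod_mod_of_dvd c (pow_dvd_pow r (Nat.le_succ t)), h]

lemma recompose' (rj a b x : ℕ) (hd : x / rj = a / rj) (hm : x % rj = b % rj) :
    x = rj * (a / rj) + b % rj := by
  rw [← hd, ← hm, Nat.div_add_mod]

/-- Unique paths: two paths p, q through the nonzero entries of the butterfly matrices
A_1, ..., A_m with the same start p 0 = q 0 and end p m = q m coincide. -/
theorem butterfly_unique_paths (r m : ℕ) (hr : 2 ≤ r) (hm : 1 ≤ m)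
    (p q : Fin (m + 1) → Fin (r ^ m))
    (hp : (∏ k : Fin m, Ak r m k (p k.succ) (p k.castSucc)) ≠ 0)
    (hq : (∏ k : Fin m, Ak r m k (q k.succ) (q k.castSucc)) ≠ 0)
    (h0 : p 0 = q 0) (hlast : p (Fin.last m) = q (Fin.last m)) :
    p = q := by
  have key : ∀ (f : Fin (m + 1) → Fin (r ^ m)),
      ((∏ k : Fin m, Ak r m k (f k.succ) (f k.castSucc)) ≠ 0) →
      ∀ j : Fin (m + 1),
        (f j).1 = r ^ j.1 * ((f 0).1 / r ^ j.1) + (f (Fin.last m)).1 % r ^ j.1 := by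
    intro f hf j
    have H : ∀ k : Fin m, (f k.succ).1 / r ^ (k.1 + 1) = (f k.castSucc).1 / r ^ (k.1 + 1)
        ∧ (f k.succ).1 % r ^ k.1 = (f k.castSucc).1 % r ^ k.1 := by
      intro k
      refine ak_ne_zero' k ?_
      intro hz
      exact hf (Finset.prod_eq_zero (Finset.mem_univ k) hz)
    have div_eq : ∀ t (ht : t ≤ m), (f ⟨t, by omega⟩).1 / r ^ t = (f 0).1 / r ^ t := by
      intro t
      induction t with
      | zero => intro _; rfl
      | succ t ih =>
        intro ht
        have ht' : t < m := by omega
        have hk := (H ⟨t, ht'⟩).1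
        have hsucc : (⟨t, ht'⟩ : Fin m).succ = (⟨t + 1, by omega⟩ : Fin (m + 1)) := rfl
        have hcast : (⟨t, ht'⟩ : Fin m).castSucc = (⟨t, by omega⟩ : Fin (m + 1)) := rfl
        rw [hsucc, hcast] at hk
        exact hk.trans (div_lift' r t (ih (by omega)))
    have mod_eq : ∀ s t (hts : t + s = m),
        (f ⟨t, by omega⟩).1 % r ^ t = (f (Fin.last m)).1 % r ^ t := by
      intro s
      induction s with
      | zero =>
        intro t hts
        have : (⟨t, by omega⟩ : Fin (m + 1)) = Fin.last m := by
          apply Fin.ext; simp; omega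
        rw [this]
      | succ s ih =>
        intro t hts
        have ht' : t < m := by omega
        have hk := (H ⟨t, ht'⟩).2
        have hsucc : (⟨t, ht'⟩ : Fin m).succ = (⟨t + 1, by omega⟩ : Fin (m + 1)) := rfl
        have hcast : (⟨t, ht'⟩ : Fin m).castSucc = (⟨t, by omega⟩ : Fin (m + 1)) := rfl
        rw [hsucc, hcast] at hk
        exact hk.symm.trans (mod_lower' r t (ih (t + 1) (by omega)))
    have hj : (⟨j.1, by omega⟩ : Fin (m + 1)) = j := rfl
    have hd := div_eq j.1 (by omega)
    have hmo := mod_eq (m - j.1) j.1 (by omega)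
    rw [hj] at hd hmo
    exact recompose' (r ^ j.1) (f 0).1 (f (Fin.last m)).1 (f j).1 hd hmo
  funext j
  apply Fin.ext
  rw [key p hp j, key q hq j, h0, hlast]
end
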